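/- arXiv:2410.21851 — 3 statements merged into one kernel-verified Lean document; each statement's English description precedes it below -/
import Mathlib

section
/- Let $K$ be a compact metric space with metric $d$, and let $(f_n)_{n\in\omega}$ be a sequence of surjective isometries of $K$ onto itself. Then there exist natural numbers $k_0 < k'_0 < k_1 < k'_1 < \cdots < k_i < k'_i < \cdots$ such that for every $i$, $\sup_{x\in K} d(f_{k'_i}(f_{k'_i-1}(\cdots f_{k_i+1}(f_{k_i}(x))\cdots)), x) < 2^{-i}$. -/
/-- Composition `f_b ∘ f_{b-1} ∘ ⋯ ∘ f_a` (applying `f a` first). -/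
def compSeq {K : Type*} (f : ℕ → K → K) (a b : ℕ) (x : K) : K :=
  (List.range (b + 1 - a)).foldl (fun y j => f (a + j) y) x

theorem stmt_0 {K : Type*} [MetricSpace K] [CompactSpace K]
    (f : ℕ → K → K)
    (hiso : ∀ n x y, dist (f n x) (f n y) = dist x y)
    (hsurj : ∀ n, Function.Surjective (f n)) :
    ∃ k k' : ℕ → ℕ, (∀ i, k i < k' i) ∧ (∀ i, k' i < k (i + 1)) ∧
      ∀ i, (⨆ x : K, dist (compSeq f (k i) (k' i) x) x) < (1 / 2 : ℝ) ^ i := by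
  have hhalf : ∀ i : ℕ, ((1:ℝ)/2)^(i+1) < (1/2)^i := by
    intro i
    have := pow_pos (by norm_num : (0:ℝ) < 1/2) i
    rw [pow_succ]
    nlinarith
  set G : ℕ → K → K := fun nn => compSeq f 0 nn with hGdef
  have hcs : ∀ (a b : ℕ) (x : K), a ≤ b + 1 →
      compSeq f a (b+1) x = f (b+1) (compSeq f a b x) := by
    intro a b x hab
    unfold compSeq
    have h1 : b + 1 + 1 - a = (b + 1 - a) + 1 := by omega
    have h2 : a + (b + 1 - a) = b + 1 := by omega
    rw [h1, List.range_succ, List.foldl_append]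
    simp only [List.foldl_cons, List.foldl_nil, h2]
  have hself : ∀ (a : ℕ) (x : K), compSeq f a a x = f a x := by
    intro a x
    unfold compSeq
    have h1 : a + 1 - a = 1 := by omega
    rw [h1]
    simp [List.range_succ]
  have hG0 : ∀ x, G 0 x = f 0 x := fun x => hself 0 x
  have hGsucc : ∀ (nn : ℕ) (x : K), G (nn+1) x = f (nn+1) (G nn x) :=
    fun nn x => hcs 0 nn x (by omega)
  have hGiso : ∀ (nn : ℕ) (x y : K), dist (G nn x) (G nn y) = dist x y := by
    intro nn
    induction nn with
    | zero => intro x y; rw [hG0, hG0, hiso]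
    | succ d ih => intro x y; rw [hGsucc, hGsucc, hiso]; exact ih x y
  have hGsurj : ∀ nn, Function.Surjective (G nn) := by
    intro nn
    induction nn with
    | zero => intro z; obtain ⟨x, hx⟩ := hsurj 0 z; exact ⟨x, by rw [hG0]; exact hx⟩
    | succ d ih =>
      intro z
      obtain ⟨y, hy⟩ := hsurj (d+1) z
      obtain ⟨x, hx⟩ := ih y
      exact ⟨x, by rw [hGsucc, hx, hy]⟩
  have hkey : ∀ (c b : ℕ), c < b → ∀ x, compSeq f (c+1) b (G c x) = G b x := by
    intro c b
    induction b with
    | zero => omega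
    | succ d ih =>
      intro hcb x
      rcases Nat.lt_or_ge c d with h | h
      · rw [hcs (c+1) d _ (by omega), ih h, hGsucc]
      · have hcd : c = d := by omega
        subst hcd
        rw [hself, hGsucc]
  -- main claim
  have claim : ∀ (i N : ℕ), ∃ nn mm : ℕ, N < nn ∧ nn < mm ∧
      ∀ z, dist (compSeq f nn mm z) z ≤ (1/2 : ℝ)^(i+1) := by
    intro i N
    set ε : ℝ := (1/2)^(i+1) with hε
    have hεpos : 0 < ε := pow_pos (by norm_num) _
    obtain ⟨t, -, htfin, htcov⟩ :=
      finite_cover_balls_of_compact (isCompact_univ (X := K)) (show 0 < ε/6 by linarith)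
    haveI := htfin.fintype
    set h : ℕ → (t → K) := fun nn y => G nn y with hh
    obtain ⟨a, φ, hφ, hconv⟩ := CompactSpace.tendsto_subseq h
    rw [Metric.tendsto_atTop] at hconv
    obtain ⟨J, hJ⟩ := hconv (ε/6) (by linarith)
    set j1 := max J N with hj1
    have hd : dist (h (φ (j1+2))) (h (φ j1)) < ε/3 := by
      have h1 := hJ j1 (le_max_left _ _)
      have h2 := hJ (j1+2) (by omega)
      calc dist (h (φ (j1+2))) (h (φ j1))
          ≤ dist (h (φ (j1+2))) a + dist a (h (φ j1)) := dist_triangle _ _ _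
        _ < ε/3 := by
            rw [dist_comm a]
            simp only [Function.comp] at h1 h2
            linarith
    refine ⟨φ j1 + 1, φ (j1+2), ?_, ?_, ?_⟩
    · have h1 : j1 ≤ φ j1 := hφ.le_apply
      have h2 : N ≤ j1 := le_max_right _ _
      omega
    · have h1 : φ j1 < φ (j1+1) := hφ (by omega)
      have h2 : φ (j1+1) < φ (j1+2) := hφ (by omega)
      omega
    · intro z
      obtain ⟨x, hx⟩ := hGsurj (φ j1) z
      have hlt : φ j1 < φ (j1+2) := hφ (by omega)
      rw [← hx, hkey (φ j1) (φ (j1+2)) hlt x]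
      -- find net point
      obtain ⟨y, hyt, hxy⟩ := Set.mem_iUnion₂.1 (htcov (Set.mem_univ x))
      rw [Metric.mem_ball] at hxy
      have hy1 : dist (G (φ (j1+2)) x) (G (φ (j1+2)) y) = dist x y := hGiso _ _ _
      have hy2 : dist (G (φ j1) y) (G (φ j1) x) = dist y x := hGiso _ _ _
      have hy3 : dist (G (φ (j1+2)) y) (G (φ j1) y)
          ≤ dist (h (φ (j1+2))) (h (φ j1)) := by
        exact dist_le_pi_dist (h (φ (j1+2))) (h (φ j1)) ⟨y, hyt⟩
      have htri : dist (G (φ (j1+2)) x) (G (φ j1) x)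
          ≤ dist (G (φ (j1+2)) x) (G (φ (j1+2)) y) + dist (G (φ (j1+2)) y) (G (φ j1) y)
            + dist (G (φ j1) y) (G (φ j1) x) := dist_triangle4 _ _ _ _
      rw [dist_comm y x] at hy2
      rw [hy1, hy2] at htri
      linarith
  choose n m h1 h2 h3 using claim
  set p : ℕ → ℕ × ℕ := fun i =>
    Nat.rec ((n 0 0, m 0 0)) (fun j ih => (n (j+1) ih.2, m (j+1) ih.2)) i with hp
  have hpN : ∀ i, ∃ N, p i = (n i N, m i N) := by
    intro i
    cases i with
    | zero => exact ⟨0, rfl⟩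
    | succ j => exact ⟨(p j).2, rfl⟩
  refine ⟨fun i => (p i).1, fun i => (p i).2, ?_, ?_, ?_⟩
  · intro i
    obtain ⟨N, hN⟩ := hpN i
    show (p i).1 < (p i).2
    rw [hN]
    exact h2 i N
  · intro i
    show (p i).2 < (p (i+1)).1
    have hq : p (i+1) = (n (i+1) (p i).2, m (i+1) (p i).2) := rfl
    rw [hq]
    exact h1 (i+1) (p i).2
  · intro i
    obtain ⟨N, hN⟩ := hpN i
    show (⨆ x : K, dist (compSeq f (p i).1 (p i).2 x) x) < (1/2 : ℝ)^i
    rw [hN]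
    refine lt_of_le_of_lt (Real.iSup_le ?_ (le_of_lt (pow_pos (by norm_num) _))) (hhalf i)
    intro z
    exact h3 i N z
end

section
/- Let $K$ be a compact metric space, and let $(f_n)$ be a sequence of surjective isometries of $K$. For every $\varepsilon > 0$ and every natural number $M$, there exist natural numbers $q' > q > M$ such that $\sup_{x\in K} d(f_{q'}\circ f_{q'-1}\circ\cdots\circ f_{q+1}\circ f_{q}(x), x) < \varepsilon$. -/
/-- `P f n x = f (n-1) (⋯ (f 0 x))`. -/
def P {K : Type*} (f : ℕ → K → K) (n : ℕ) (x : K) : K :=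
  (List.range n).foldl (fun y j => f j y) x

lemma P_succ {K : Type*} (f : ℕ → K → K) (n : ℕ) (x : K) :
    P f (n + 1) x = f n (P f n x) := by
  simp [P, List.range_succ]

lemma P_split {K : Type*} (f : ℕ → K → K) (b c : ℕ) (h : b ≤ c) (x : K) :
    compSeq f (b + 1) c (P f (b + 1) x) = P f (c + 1) x := by
  have h1 : c + 1 = (b + 1) + (c - b) := by omega
  have h2 : c + 1 - (b + 1) = c - b := by omega
  simp only [compSeq, P, h2]
  conv_rhs => rw [h1, List.range_add, List.foldl_append, List.foldl_map]

lemma P_isometry {K : Type*} [MetricSpace K] (f : ℕ → K → K)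
    (hiso : ∀ n x y, dist (f n x) (f n y) = dist x y) (n : ℕ) (x y : K) :
    dist (P f n x) (P f n y) = dist x y := by
  induction n with
  | zero => simp [P]
  | succ n ih => rw [P_succ, P_succ, hiso, ih]

lemma P_surjective {K : Type*} (f : ℕ → K → K)
    (hsurj : ∀ n, Function.Surjective (f n)) (n : ℕ) :
    Function.Surjective (P f n) := by
  induction n with
  | zero => exact fun x => ⟨x, rfl⟩
  | succ n ih =>
    intro x
    obtain ⟨y, hy⟩ := hsurj n x
    obtain ⟨z, hz⟩ := ih y
    exact ⟨z, by rw [P_succ, hz, hy]⟩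

theorem stmt_1 {K : Type*} [MetricSpace K] [CompactSpace K]
    (f : ℕ → K → K)
    (hiso : ∀ n x y, dist (f n x) (f n y) = dist x y)
    (hsurj : ∀ n, Function.Surjective (f n)) :
    ∀ ε > (0 : ℝ), ∀ M : ℕ, ∃ q q' : ℕ, M < q ∧ q < q' ∧
      (⨆ x : K, dist (compSeq f q q' x) x) < ε := by
  intro ε hε M
  rcases isEmpty_or_nonempty K with hK | hK
  · refine ⟨M + 1, M + 2, by omega, by omega, ?_⟩
    rw [Real.iSup_of_isEmpty]
    exact hε
  · -- finite ε/8 net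
    set δ := ε / 8 with hδ
    have hδpos : 0 < δ := by positivity
    obtain ⟨t, -, htfin, htcov⟩ :=
      (isCompact_univ : IsCompact (Set.univ : Set K)).finite_cover_balls hδpos
    -- cluster point of the sequence of partial compositions in the product space
    set G : ℕ → (K → K) := fun n => P f n with hG
    obtain ⟨h, hcl⟩ := exists_clusterPt_of_compactSpace (Filter.map G Filter.atTop)
    have hU : t.pi (fun z => Metric.ball (h z) δ) ∈ nhds h :=
      set_pi_mem_nhds htfin (fun z _ => Metric.ball_mem_nhds _ hδpos)
    have hfreq : ∃ᶠ n in Filter.atTop, G n ∈ t.pi (fun z => Metric.ball (h z) δ) :=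
      (mapClusterPt_iff_frequently.mp hcl) _ hU
    -- pick q > M with G q close to h
    obtain ⟨q, hq1, hq2⟩ :=
      (hfreq.and_eventually (Filter.eventually_ge_atTop (M + 1))).exists
    -- pick m ≥ q + 2 with G m close to h
    obtain ⟨m, hm1, hm2⟩ :=
      (hfreq.and_eventually (Filter.eventually_ge_atTop (q + 2))).exists
    refine ⟨q, m - 1, by omega, by omega, ?_⟩
    have hqm : q - 1 ≤ m - 1 := by omega
    have key : ∀ x : K, dist (compSeq f q (m - 1) x) x ≤ ε / 2 := by
      intro x
      obtain ⟨y, hy⟩ := P_surjective f hsurj q x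
      have hq' : q - 1 + 1 = q := by omega
      have hm' : m - 1 + 1 = m := by omega
      have hsplit : compSeq f q (m - 1) x = P f m y := by
        rw [← hy, ← hq']
        rw [P_split f (q - 1) (m - 1) hqm y, hm']
      rw [hsplit, ← hy]
      -- pick a net point near y
      have : y ∈ ⋃ z ∈ t, Metric.ball z δ := htcov (Set.mem_univ y)
      simp only [Set.mem_iUnion, Metric.mem_ball] at this
      obtain ⟨z, hzt, hyz⟩ := this
      have h1 : dist (P f m y) (P f m z) = dist y z := P_isometry f hiso m y z
      have h2 : dist (P f q y) (P f q z) = dist y z := P_isometry f hiso q y z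
      have h3 : dist (P f m z) (h z) < δ := hm1 z hzt
      have h4 : dist (P f q z) (h z) < δ := hq1 z hzt
      have t1 : dist (P f m y) (P f q y) ≤ dist (P f m y) (P f q z)
          + dist (P f q z) (P f q y) := dist_triangle _ _ _
      have t2 : dist (P f m y) (P f q z) ≤ dist (P f m y) (P f m z)
          + dist (P f m z) (h z) + dist (h z) (P f q z) :=
        dist_triangle4 (P f m y) (P f m z) (h z) (P f q z)
      have h2c : dist (P f q z) (P f q y) = dist y z := by rw [dist_comm]; exact h2
      have h4c : dist (h z) (P f q z) < δ := by rw [dist_comm]; exact h4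
      have hyzle := hyz.le
      rw [hδ] at *
      linarith
    calc (⨆ x : K, dist (compSeq f q (m - 1) x) x) ≤ ε / 2 := ciSup_le key
      _ < ε := by linarith
end

section
/- Let $G$ be a Polish group with a compatible complete two-sided invariant metric $d$, and let $N$ be a closed non-archimedean subgroup of $G$ (i.e., $N$ has a neighborhood base at the identity consisting of open subgroups of $N$). Let $(e_n)$ be a sequence in $N$ such that $\lim_n d(e_n^{-1}e_{n+1}, 1_G) = 0$. Then for every $\varepsilon > 0$ there is $N_0$ such that $d(e_n, e_m) < \varepsilon$ for all $m \geq n \geq N_0$; in particular $(e_n)$ is Cauchy and converges in $N$. -/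
/-!
Left invariance turns `d(eₙ, eₘ)` into `d(eₙ⁻¹eₘ, 1)`. Given `ε`, pick an open subgroup `M` of `N`
inside the `ε`-ball and an `ε'`-ball of `N` inside `M`. Eventually every increment `eₖ⁻¹eₖ₊₁` lies
in that `ε'`-ball, hence in `M`; since `M` is a subgroup, so do all the products
`eₙ⁻¹eₘ = (eₙ⁻¹eₙ₊₁) ⋯ (eₘ₋₁⁻¹eₘ)`, which therefore lie in the `ε`-ball. Thus `(eₙ)` is Cauchy, and
its limit lies in the closed subgroup `N`.
-/

open Filter Topology

theorem dist_eq_dist_inv_mul_one {G : Type*} [Group G] [PseudoMetricSpace G]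
    [IsIsometricSMul G G] (a b : G) : dist a b = dist (a⁻¹ * b) 1 := by
  rw [← dist_mul_left a⁻¹, inv_mul_cancel, dist_comm]

theorem Subgroup.inv_mul_mem_of_forall_ge_inv_mul_succ_mem {G : Type*} [Group G]
    (M : Subgroup G) {e : ℕ → G} {n : ℕ} (hstep : ∀ k ≥ n, (e k)⁻¹ * e (k + 1) ∈ M) :
    ∀ m ≥ n, (e n)⁻¹ * e m ∈ M := by
  intro m hm
  induction m, hm using Nat.le_induction with
  | base => simp
  | succ k hk ih => simpa [mul_assoc] using M.mul_mem ih (hstep k hk)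

theorem Subgroup.exists_forall_inv_mul_mem_of_eventually {G : Type*} [Group G]
    (M : Subgroup G) {e : ℕ → G} (hstep : ∀ᶠ k in atTop, (e k)⁻¹ * e (k + 1) ∈ M) :
    ∃ N₀ : ℕ, ∀ m n : ℕ, N₀ ≤ n → n ≤ m → (e n)⁻¹ * e m ∈ M := by
  obtain ⟨N₀, hN₀⟩ := eventually_atTop.mp hstep
  exact ⟨N₀, fun m n hn hnm =>
    M.inv_mul_mem_of_forall_ge_inv_mul_succ_mem (fun k hk => hN₀ k (hn.trans hk)) m hnm⟩

theorem stmt_16_general {G : Type*} [MetricSpace G] [Group G] [CompleteSpace G]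
    (hd : ∀ a b g h : G, dist (a * g * b) (a * h * b) = dist g h)
    (N : Subgroup G) (hclosed : IsClosed (N : Set G))
    -- `N` is non-archimedean: open subgroups of `N` form a neighborhood base of `1` in `N`
    (hNA : ∀ ε > (0 : ℝ), ∃ M : Subgroup G, M ≤ N ∧
      (∀ h ∈ M, dist h (1 : G) < ε) ∧
      ∃ ε' > (0 : ℝ), ∀ h ∈ N, dist h (1 : G) < ε' → h ∈ M)
    (e : ℕ → G) (he : ∀ n, e n ∈ N)
    (hcauchy : Tendsto (fun n => dist ((e n)⁻¹ * e (n + 1)) (1 : G)) atTop (𝓝 0)) :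
    (∀ ε > (0 : ℝ), ∃ N₀ : ℕ, ∀ m n : ℕ, N₀ ≤ n → n ≤ m → dist (e n) (e m) < ε) ∧
    ∃ l ∈ N, Tendsto e atTop (𝓝 l) := by
  have : IsIsometricSMul G G :=
    ⟨fun a => Isometry.of_dist_eq fun g h => by simpa using hd a 1 g h⟩
  have key : ∀ ε > (0 : ℝ), ∃ N₀ : ℕ, ∀ m n : ℕ, N₀ ≤ n → n ≤ m → dist (e n) (e m) < ε := by
    intro ε hε
    obtain ⟨M, -, hMε, ε', hε', hball⟩ := hNA ε hε
    have hstep : ∀ᶠ k in atTop, (e k)⁻¹ * e (k + 1) ∈ M :=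
      (hcauchy.eventually (gt_mem_nhds hε')).mono fun k hk =>
        hball _ (N.mul_mem (N.inv_mem (he k)) (he (k + 1))) hk
    obtain ⟨N₀, hN₀⟩ := M.exists_forall_inv_mul_mem_of_eventually hstep
    exact ⟨N₀, fun m n hn hnm => dist_eq_dist_inv_mul_one (e n) (e m) ▸ hMε _ (hN₀ m n hn hnm)⟩
  have hcs : CauchySeq e := Metric.cauchySeq_iff'.2 fun ε hε =>
    let ⟨N₀, hN₀⟩ := key ε hε
    ⟨N₀, fun n hn => dist_comm (e N₀) (e n) ▸ hN₀ n N₀ le_rfl hn⟩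
  obtain ⟨l, hl⟩ := cauchySeq_tendsto_of_complete hcs
  exact ⟨key, l, hclosed.mem_of_tendsto hl (Eventually.of_forall he), hl⟩

theorem stmt_16 {G : Type*} [MetricSpace G] [Group G] [IsTopologicalGroup G]
    [PolishSpace G] [CompleteSpace G]
    (hd : ∀ a b g h : G, dist (a * g * b) (a * h * b) = dist g h)
    (N : Subgroup G) (hclosed : IsClosed (N : Set G))
    -- `N` is non-archimedean: open subgroups of `N` form a neighborhood base of `1` in `N`
    (hNA : ∀ ε > (0 : ℝ), ∃ M : Subgroup G, M ≤ N ∧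
      (∀ h ∈ M, dist h (1 : G) < ε) ∧
      ∃ ε' > (0 : ℝ), ∀ h ∈ N, dist h (1 : G) < ε' → h ∈ M)
    (e : ℕ → G) (he : ∀ n, e n ∈ N)
    (hcauchy : Tendsto (fun n => dist ((e n)⁻¹ * e (n + 1)) (1 : G)) atTop (𝓝 0)) :
    (∀ ε > (0 : ℝ), ∃ N₀ : ℕ, ∀ m n : ℕ, N₀ ≤ n → n ≤ m → dist (e n) (e m) < ε) ∧
    ∃ l ∈ N, Tendsto e atTop (𝓝 l) :=
  stmt_16_general hd N hclosed hNA e he hcauchy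
end
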